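/- The rational Dunkl operators pairwise commute: D_b ∘ D_c = D_c ∘ D_b as operators on ℂ[V], for all b, c ∈ V. -/

import Mathlib

/-!
Write `D_b = ∂_b + Σ_{α ∈ R_+} k_α (b,α) Δ_α` with the divided difference
`Δ_α f = (f - s_α f) / x_α`. Since `s_α` permutes `R_+` up to sign and `k` is invariant,
`s_α D_b s_α = D_{s_α b}`. Together with the product rule
`D_b (x_a f) = x_a D_b f + (b,a) f + Σ_α k_α (b,α) ⟨a, α^∨⟩ s_α f` this gives
`[D_b, D_c] (x_a f) = x_a [D_b, D_c] f`: what is left over is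
`Σ_α k_α ⟨a, α^∨⟩ s_α ((b,α) D_c f + (c,α) D_{s_α b} f)`, which is symmetric in `b, c`
because `D_{s_α b} = D_b - ⟨b, α^∨⟩ D_α`. As `[D_b, D_c]` kills constants,
induction on polynomials finishes the proof.
-/

noncomputable section

open scoped RealInnerProductSpace BigOperators

namespace Stmt17

/-- Euclidean space `V = ℝ^n`. -/
abbrev V (n : ℕ) := EuclideanSpace ℝ (Fin n)

/-- Polynomial functions on `V`, in coordinates. -/
abbrev Poly (n : ℕ) := MvPolynomial (Fin n) ℂ

/-- The linear polynomial `x_b = (b, ·)`. -/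
def xpoly (n : ℕ) (b : V n) : Poly n :=
  ∑ i : Fin n, MvPolynomial.C (b i : ℂ) * MvPolynomial.X i

/-- The action of the orthogonal reflection `s_α` on polynomial functions,
`(s_α f)(v) = f(s_α v)`. -/
def sAct (n : ℕ) (α : V n) : Poly n →ₐ[ℂ] Poly n :=
  MvPolynomial.aeval fun i : Fin n =>
    MvPolynomial.X i - MvPolynomial.C ((2 * (α i) / ⟪α, α⟫ : ℝ) : ℂ) * xpoly n α

/-- The directional derivative `∂_b` on polynomials. -/
def der (n : ℕ) (b : V n) (f : Poly n) : Poly n :=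
  ∑ i : Fin n, MvPolynomial.C (b i : ℂ) * MvPolynomial.pderiv i f

/-- `IsDunkl Rplus k b Dop` says that `Dop` is the rational Dunkl operator
`D_b f = ∂_b f + Σ_{α ∈ R_+} k_α (b,α)·(f − s_α f)/x_α`. -/
def IsDunkl (n : ℕ) (Rplus : Finset (V n)) (k : V n → ℂ) (b : V n)
    (Dop : Poly n → Poly n) : Prop :=
  ∀ f : Poly n, ∃ g : V n → Poly n,
    (∀ α ∈ Rplus, xpoly n α * g α = f - sAct n α f) ∧
    Dop f = der n b f + ∑ α ∈ Rplus, (k α * (⟪b, α⟫ : ℂ)) • g α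

open MvPolynomial

variable {n : ℕ}

def reflect (α v : V n) : V n := v - (2 * ⟪v, α⟫ / ⟪α, α⟫) • α

section Reflection

variable {α : V n}

lemma inner_reflect_left (α v w : V n) :
    ⟪reflect α v, w⟫ = ⟪v, w⟫ - 2 * ⟪v, α⟫ / ⟪α, α⟫ * ⟪α, w⟫ := by
  rw [reflect, inner_sub_left, real_inner_smul_left]

lemma inner_reflect_comm (α v w : V n) : ⟪reflect α v, w⟫ = ⟪v, reflect α w⟫ := by
  rw [real_inner_comm (reflect α w), inner_reflect_left, inner_reflect_left, real_inner_comm v w,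
    real_inner_comm α v, real_inner_comm α w]
  ring

lemma inner_reflect_root (hα : α ≠ 0) (v : V n) : ⟪reflect α v, α⟫ = -⟪v, α⟫ := by
  have : ⟪α, α⟫ ≠ 0 := inner_self_ne_zero.mpr hα
  rw [inner_reflect_left]
  field_simp
  ring

lemma reflect_reflect (hα : α ≠ 0) (v : V n) : reflect α (reflect α v) = v := by
  rw [reflect, inner_reflect_root hα, reflect]
  module

lemma inner_reflect_reflect (hα : α ≠ 0) (v w : V n) :
    ⟪reflect α v, reflect α w⟫ = ⟪v, w⟫ := by
  rw [inner_reflect_comm, reflect_reflect hα]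

lemma reflect_root (hα : α ≠ 0) : reflect α α = -α := by
  have : ⟪α, α⟫ ≠ 0 := inner_self_ne_zero.mpr hα
  rw [reflect, mul_div_assoc, div_self this]
  module

lemma reflect_neg (α v : V n) : reflect α (-v) = -reflect α v := by
  simp only [reflect, inner_neg_left]
  module

lemma reflect_neg_root (α v : V n) : reflect (-α) v = reflect α v := by
  simp only [reflect, inner_neg_right, inner_neg_left, neg_neg]
  module

lemma reflect_ne_zero (hα : α ≠ 0) {v : V n} (hv : v ≠ 0) : reflect α v ≠ 0 := by
  intro h
  apply hv
  rw [← reflect_reflect hα v, h, reflect]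
  simp

lemma reflect_reflect_conj (hα : α ≠ 0) (β v : V n) :
    reflect α (reflect β v) = reflect (reflect α β) (reflect α v) := by
  conv_rhs => rw [reflect, inner_reflect_reflect hα, inner_reflect_reflect hα]
  simp only [reflect, inner_sub_left, real_inner_smul_left]
  module

end Reflection

lemma inner_eq_sum (a b : V n) : ⟪a, b⟫ = ∑ i, a i * b i := by
  simp [PiLp.inner_apply, mul_comm]

lemma xpoly_smul (r : ℝ) (a : V n) : xpoly n (r • a) = C (r : ℂ) * xpoly n a := by
  simp [xpoly, Finset.mul_sum, mul_assoc]

lemma xpoly_neg (a : V n) : xpoly n (-a) = -xpoly n a := by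
  simp [xpoly]

lemma xpoly_sub (a b : V n) : xpoly n (a - b) = xpoly n a - xpoly n b := by
  simp [xpoly, sub_mul, Finset.sum_sub_distrib]

lemma xpoly_single (i : Fin n) : xpoly n (EuclideanSpace.single i 1) = X i := by
  simp [xpoly, PiLp.single_apply, apply_ite, ite_mul]

lemma eval_xpoly (a v : V n) : eval (fun i => (v i : ℂ)) (xpoly n a) = ⟪a, v⟫ := by
  simp [xpoly, inner_eq_sum]

lemma xpoly_ne_zero {a : V n} (ha : a ≠ 0) : xpoly n a ≠ 0 := by
  intro h
  have := eval_xpoly a a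
  rw [h, map_zero, eq_comm, Complex.ofReal_eq_zero] at this
  exact inner_self_ne_zero.mpr ha this

lemma algHom_ext_xpoly {φ ψ : Poly n →ₐ[ℂ] Poly n}
    (h : ∀ a : V n, φ (xpoly n a) = ψ (xpoly n a)) : φ = ψ :=
  algHom_ext fun i => by rw [← xpoly_single, h]

lemma sAct_xpoly (α a : V n) : sAct n α (xpoly n a) = xpoly n (reflect α a) := by
  rw [reflect, xpoly_sub, xpoly_smul, xpoly, map_sum]
  simp only [map_mul, sAct, aeval_X, aeval_C, mul_sub, Finset.sum_sub_distrib]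
  congr 1
  simp only [← mul_assoc, algebraMap_eq, ← map_mul, ← Finset.sum_mul, ← map_sum]
  congr 2
  rw [inner_eq_sum a α, Finset.mul_sum, Finset.sum_div]
  push_cast
  exact Finset.sum_congr rfl fun i _ => by ring

section ReflectionAction

variable {α : V n}

lemma sAct_C (α : V n) (z : ℂ) : sAct n α (C z) = C z :=
  (sAct n α).commutes z

lemma sAct_neg_root (α : V n) : sAct n (-α) = sAct n α :=
  algHom_ext_xpoly fun a => by rw [sAct_xpoly, sAct_xpoly, reflect_neg_root]

lemma sAct_reflect_sAct (hα : α ≠ 0) (β : V n) (f : Poly n) :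
    sAct n (reflect α β) (sAct n α f) = sAct n α (sAct n β f) := by
  have : (sAct n (reflect α β)).comp (sAct n α) = (sAct n α).comp (sAct n β) :=
    algHom_ext_xpoly fun a => by simp [sAct_xpoly, reflect_reflect_conj hα]
  exact DFunLike.congr_fun this f

end ReflectionAction

lemma der_add (b : V n) (f g : Poly n) : der n b (f + g) = der n b f + der n b g := by
  simp [der, Finset.sum_add_distrib, mul_add]

lemma der_smul (b : V n) (z : ℂ) (f : Poly n) : der n b (z • f) = z • der n b f := by
  simp [der, Finset.smul_sum]

lemma der_C (b : V n) (z : ℂ) : der n b (C z) = 0 := by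
  simp [der]

lemma der_mul (b : V n) (f g : Poly n) :
    der n b (f * g) = der n b f * g + f * der n b g := by
  simp only [der, Derivation.leibniz, smul_eq_mul, mul_add, Finset.sum_add_distrib,
    Finset.sum_mul, Finset.mul_sum]
  rw [add_comm]
  congr 1 <;> exact Finset.sum_congr rfl fun i _ => by ring

lemma der_sub_left (b c : V n) (f : Poly n) : der n (b - c) f = der n b f - der n c f := by
  simp [der, sub_mul, Finset.sum_sub_distrib]

lemma der_smul_left (r : ℝ) (b : V n) (f : Poly n) : der n (r • b) f = (r : ℂ) • der n b f := by
  simp [der, Finset.smul_sum, smul_eq_C_mul, mul_assoc]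

lemma der_xpoly (b a : V n) : der n b (xpoly n a) = C (⟪b, a⟫ : ℂ) := by
  simp [der, xpoly, pderiv_X, Pi.single_apply, inner_eq_sum, mul_comm]

lemma der_sAct (α b : V n) (f : Poly n) :
    der n b (sAct n α f) = sAct n α (der n (reflect α b) f) := by
  induction f using MvPolynomial.induction_on with
  | C z => rw [sAct_C, der_C, der_C, map_zero]
  | add f g hf hg => rw [map_add, der_add, hf, hg, der_add, map_add]
  | mul_X f i ih =>
    rw [← xpoly_single, map_mul, der_mul, ih, der_mul, map_add, map_mul, map_mul, sAct_xpoly,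
      der_xpoly, der_xpoly, sAct_C, inner_reflect_comm]

section DividedDifference

lemma exists_xpoly_mul_eq_sub_sAct (α : V n) (f : Poly n) :
    ∃ g : Poly n, xpoly n α * g = f - sAct n α f := by
  induction f using MvPolynomial.induction_on with
  | C z => exact ⟨0, by rw [sAct_C]; ring⟩
  | add f g hf hg =>
    obtain ⟨u, hu⟩ := hf
    obtain ⟨v, hv⟩ := hg
    exact ⟨u + v, by rw [map_add, mul_add, hu, hv]; ring⟩
  | mul_X f i ih =>
    obtain ⟨u, hu⟩ := ih
    -- `f X_i - s(f) s(X_i) = (f - s f) X_i + s(f) (X_i - s X_i)`, and `X_i - s X_i` is a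
    -- multiple of `x_α`
    refine ⟨u * X i + C ((2 * α i / ⟪α, α⟫ : ℝ) : ℂ) * sAct n α f, ?_⟩
    rw [map_mul, sAct, aeval_X, ← sAct, mul_add, ← mul_assoc, hu]
    ring

lemma sAct_zero : sAct n 0 = AlgHom.id ℂ (Poly n) :=
  algHom_ext fun i => by simp [sAct]

-- The junk value `0` at `α = 0` keeps `divDiff α` linear for every `α`.
open Classical in
def divDiff (α : V n) : Poly n →ₗ[ℂ] Poly n :=
  if hα : α = 0 then 0 else
  { toFun f := (exists_xpoly_mul_eq_sub_sAct α f).choose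
    map_add' f g := mul_left_cancel₀ (xpoly_ne_zero hα) <| by
      rw [mul_add, (exists_xpoly_mul_eq_sub_sAct α _).choose_spec,
        (exists_xpoly_mul_eq_sub_sAct α f).choose_spec,
        (exists_xpoly_mul_eq_sub_sAct α g).choose_spec, map_add]
      ring
    map_smul' z f := mul_left_cancel₀ (xpoly_ne_zero hα) <| by
      rw [RingHom.id_apply, mul_smul_comm, (exists_xpoly_mul_eq_sub_sAct α _).choose_spec,
        (exists_xpoly_mul_eq_sub_sAct α f).choose_spec, map_smul, smul_sub] }

lemma xpoly_mul_divDiff (α : V n) (f : Poly n) :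
    xpoly n α * divDiff α f = f - sAct n α f := by
  by_cases hα : α = 0
  · simp [divDiff, hα, sAct_zero]
  · simp only [divDiff, hα, dite_false]
    exact (exists_xpoly_mul_eq_sub_sAct α f).choose_spec

variable {α : V n}

lemma divDiff_eq (hα : α ≠ 0) {f g : Poly n} (h : xpoly n α * g = f - sAct n α f) :
    divDiff α f = g :=
  mul_left_cancel₀ (xpoly_ne_zero hα) (by rw [h, xpoly_mul_divDiff])

lemma divDiff_C (hα : α ≠ 0) (z : ℂ) : divDiff α (C z) = 0 :=
  divDiff_eq hα (by rw [sAct_C]; ring)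

lemma divDiff_neg_root (hα : α ≠ 0) (f : Poly n) : divDiff (-α) f = -divDiff α f :=
  divDiff_eq (neg_ne_zero.mpr hα) (by
    rw [sAct_neg_root, xpoly_neg, neg_mul_neg, xpoly_mul_divDiff])

lemma divDiff_xpoly_mul (hα : α ≠ 0) (a : V n) (f : Poly n) :
    divDiff α (xpoly n a * f)
      = xpoly n a * divDiff α f + C ((2 * ⟪a, α⟫ / ⟪α, α⟫ : ℝ) : ℂ) * sAct n α f := by
  refine divDiff_eq hα ?_
  rw [map_mul, sAct_xpoly, reflect, xpoly_sub, xpoly_smul, mul_add, mul_left_comm,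
    xpoly_mul_divDiff]
  ring

lemma sAct_divDiff (hα : α ≠ 0) {β : V n} (hβ : β ≠ 0) (f : Poly n) :
    sAct n α (divDiff β f) = divDiff (reflect α β) (sAct n α f) :=
  (divDiff_eq (reflect_ne_zero hα hβ) (by
    rw [← sAct_xpoly, ← map_mul, xpoly_mul_divDiff, map_sub, sAct_reflect_sAct hα])).symm

end DividedDifference

section Dunkl

def dunkl (Rplus : Finset (V n)) (k : V n → ℂ) (b : V n) : Poly n →ₗ[ℂ] Poly n where
  toFun f := der n b f + ∑ α ∈ Rplus, (k α * (⟪b, α⟫ : ℂ)) • divDiff α f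
  map_add' f g := by
    simp only [der_add, map_add, smul_add, Finset.sum_add_distrib]
    abel
  map_smul' z f := by
    simp only [der_smul, map_smul, smul_add, Finset.smul_sum, smul_comm z, RingHom.id_apply]

variable {Rplus : Finset (V n)} {k : V n → ℂ}

lemma dunkl_apply (b : V n) (f : Poly n) :
    dunkl Rplus k b f = der n b f + ∑ α ∈ Rplus, (k α * (⟪b, α⟫ : ℂ)) • divDiff α f :=
  rfl

lemma dunkl_sub_left (b c : V n) (f : Poly n) :
    dunkl Rplus k (b - c) f = dunkl Rplus k b f - dunkl Rplus k c f := by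
  simp only [dunkl_apply, der_sub_left, inner_sub_left, Complex.ofReal_sub, mul_sub, sub_smul,
    Finset.sum_sub_distrib]
  abel

lemma dunkl_smul_left (r : ℝ) (b : V n) (f : Poly n) :
    dunkl Rplus k (r • b) f = (r : ℂ) • dunkl Rplus k b f := by
  simp only [dunkl_apply, der_smul_left, real_inner_smul_left, Complex.ofReal_mul, smul_add,
    Finset.smul_sum, smul_smul]
  congr 1
  exact Finset.sum_congr rfl fun α _ => by rw [mul_left_comm]

lemma dunkl_reflect_left (α b : V n) (f : Poly n) :
    dunkl Rplus k (reflect α b) f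
      = dunkl Rplus k b f - ((2 * ⟪b, α⟫ / ⟪α, α⟫ : ℝ) : ℂ) • dunkl Rplus k α f := by
  rw [reflect, dunkl_sub_left, dunkl_smul_left]

lemma dunkl_C (hRplus : ∀ α ∈ Rplus, α ≠ 0) (b : V n) (z : ℂ) : dunkl Rplus k b (C z) = 0 := by
  rw [dunkl_apply, der_C, zero_add]
  exact Finset.sum_eq_zero fun α hα => by rw [divDiff_C (hRplus α hα), smul_zero]

lemma dunkl_xpoly_mul (hRplus : ∀ α ∈ Rplus, α ≠ 0) (b a : V n) (f : Poly n) :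
    dunkl Rplus k b (xpoly n a * f)
      = xpoly n a * dunkl Rplus k b f + (⟪b, a⟫ : ℂ) • f
        + ∑ α ∈ Rplus, (k α * (⟪b, α⟫ : ℂ) * ((2 * ⟪a, α⟫ / ⟪α, α⟫ : ℝ) : ℂ)) • sAct n α f := by
  have hterm : ∀ α ∈ Rplus, (k α * (⟪b, α⟫ : ℂ)) • divDiff α (xpoly n a * f)
      = xpoly n a * ((k α * (⟪b, α⟫ : ℂ)) • divDiff α f)
        + (k α * (⟪b, α⟫ : ℂ) * ((2 * ⟪a, α⟫ / ⟪α, α⟫ : ℝ) : ℂ)) • sAct n α f := fun α hα => by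
    rw [divDiff_xpoly_mul (hRplus α hα), smul_add, mul_smul_comm, ← smul_eq_C_mul, smul_smul]
  rw [dunkl_apply, dunkl_apply, der_mul, der_xpoly, Finset.sum_congr rfl hterm,
    Finset.sum_add_distrib, ← Finset.mul_sum, smul_eq_C_mul]
  ring

lemma IsDunkl.eq_dunkl {b : V n} {Dop : Poly n → Poly n} (hD : IsDunkl n Rplus k b Dop)
    (hRplus : ∀ α ∈ Rplus, α ≠ 0) : Dop = dunkl Rplus k b := by
  funext f
  obtain ⟨g, hg, hDf⟩ := hD f
  rw [hDf, dunkl_apply]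
  congr 1
  exact Finset.sum_congr rfl fun α hα => by rw [divDiff_eq (hRplus α hα) (hg α hα)]

end Dunkl

structure IsPositiveSystem (R Rplus : Finset (V n)) : Prop where
  reflect_mem : ∀ α ∈ R, ∀ β ∈ R, reflect α β ∈ R
  subset : Rplus ⊆ R
  mem_or_neg_mem : ∀ α ∈ R, α ∈ Rplus ∨ -α ∈ Rplus
  neg_not_mem : ∀ α ∈ Rplus, -α ∉ Rplus

namespace IsPositiveSystem

variable {R Rplus : Finset (V n)}

lemma ne_zero (hR : IsPositiveSystem R Rplus) {α : V n} (hα : α ∈ R) : α ≠ 0 := by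
  rintro rfl
  have h0 : (0 : V n) ∈ Rplus := by simpa using hR.mem_or_neg_mem 0 hα
  exact hR.neg_not_mem 0 h0 (by simpa using h0)

lemma sum_reflect (hR : IsPositiveSystem R Rplus) {M : Type*} [AddCommMonoid M] {α : V n}
    (hα : α ∈ R) (φ : V n → M) (hφ : ∀ β ∈ R, φ (-β) = φ β) :
    ∑ β ∈ Rplus, φ (reflect α β) = ∑ β ∈ Rplus, φ β := by
  classical
  have hα0 := hR.ne_zero hα
  -- `s_α` permutes `R` and commutes with `-`, so up to sign it permutes `Rplus`
  let τ : V n → V n := fun β => if reflect α β ∈ Rplus then reflect α β else -reflect α β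
  have hτ_mem : ∀ β ∈ Rplus, τ β ∈ Rplus := fun β hβ => by
    by_cases h : reflect α β ∈ Rplus
    · simp [τ, h]
    · simpa [τ, h] using hR.mem_or_neg_mem _ (hR.reflect_mem α hα β (hR.subset hβ))
  have hτ_τ : ∀ β ∈ Rplus, τ (τ β) = β := fun β hβ => by
    by_cases h : reflect α β ∈ Rplus
    · simp [τ, h, reflect_reflect hα0, hβ]
    · simp [τ, h, reflect_neg, reflect_reflect hα0, hR.neg_not_mem β hβ]
  refine Finset.sum_nbij' τ τ hτ_mem hτ_mem hτ_τ hτ_τ fun β hβ => ?_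
  by_cases h : reflect α β ∈ Rplus
  · simp [τ, h]
  · simp [τ, h, hφ _ (hR.reflect_mem α hα β (hR.subset hβ))]

end IsPositiveSystem

section Commutation

variable {R Rplus : Finset (V n)} {k : V n → ℂ}

lemma sAct_dunkl (hR : IsPositiveSystem R Rplus)
    (hk : ∀ α ∈ R, ∀ β ∈ R, k (reflect α β) = k β) {α : V n} (hα : α ∈ R) (d : V n) (f : Poly n) :
    sAct n α (dunkl Rplus k d f) = dunkl Rplus k (reflect α d) (sAct n α f) := by
  have hα0 := hR.ne_zero hα
  have hk_neg : ∀ β ∈ R, k (-β) = k β := fun β hβ => by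
    rw [← reflect_root (hR.ne_zero hβ), hk β hβ β hβ]
  let φ : V n → Poly n := fun γ =>
    (k γ * (⟪reflect α d, γ⟫ : ℂ)) • divDiff γ (sAct n α f)
  have hφ : ∀ β ∈ R, φ (-β) = φ β := fun β hβ => by
    simp only [φ, hk_neg β hβ, inner_neg_right, divDiff_neg_root (hR.ne_zero hβ),
      Complex.ofReal_neg, mul_neg, neg_smul, smul_neg, neg_neg]
  have hterm : ∀ β ∈ Rplus,
      sAct n α ((k β * (⟪d, β⟫ : ℂ)) • divDiff β f) = φ (reflect α β) := fun β hβ => by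
    rw [map_smul, sAct_divDiff hα0 (hR.ne_zero (hR.subset hβ)), ← hk α hα β (hR.subset hβ),
      ← inner_reflect_reflect hα0 d β]
  rw [dunkl_apply, dunkl_apply, map_add, der_sAct, reflect_reflect hα0, map_sum,
    Finset.sum_congr rfl hterm, hR.sum_reflect hα φ hφ]

lemma dunkl_sAct (hR : IsPositiveSystem R Rplus)
    (hk : ∀ α ∈ R, ∀ β ∈ R, k (reflect α β) = k β) {α : V n} (hα : α ∈ R) (u : V n) (f : Poly n) :
    dunkl Rplus k u (sAct n α f) = sAct n α (dunkl Rplus k (reflect α u) f) := by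
  rw [sAct_dunkl hR hk hα, reflect_reflect (hR.ne_zero hα)]

lemma dunkl_dunkl_xpoly_mul (hR : IsPositiveSystem R Rplus)
    (hk : ∀ α ∈ R, ∀ β ∈ R, k (reflect α β) = k β) (u v a : V n) (f : Poly n) :
    dunkl Rplus k u (dunkl Rplus k v (xpoly n a * f))
      = xpoly n a * dunkl Rplus k u (dunkl Rplus k v f)
        + (⟪u, a⟫ : ℂ) • dunkl Rplus k v f + (⟪v, a⟫ : ℂ) • dunkl Rplus k u f
        + ∑ α ∈ Rplus, (k α * ((2 * ⟪a, α⟫ / ⟪α, α⟫ : ℝ) : ℂ)) • sAct n α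
            ((⟪u, α⟫ : ℂ) • dunkl Rplus k v f + (⟪v, α⟫ : ℂ) • dunkl Rplus k (reflect α u) f) := by
  have hRplus : ∀ α ∈ Rplus, α ≠ 0 := fun α hα => hR.ne_zero (hR.subset hα)
  have hterm : ∀ α ∈ Rplus,
      dunkl Rplus k u ((k α * (⟪v, α⟫ : ℂ) * ((2 * ⟪a, α⟫ / ⟪α, α⟫ : ℝ) : ℂ)) • sAct n α f)
        = (k α * ((2 * ⟪a, α⟫ / ⟪α, α⟫ : ℝ) : ℂ)) • sAct n α
            ((⟪v, α⟫ : ℂ) • dunkl Rplus k (reflect α u) f) := fun α hα => by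
    rw [map_smul, dunkl_sAct hR hk (hR.subset hα), map_smul, smul_smul, mul_right_comm]
  rw [dunkl_xpoly_mul hRplus, map_add, map_add, dunkl_xpoly_mul hRplus, map_smul, map_sum,
    Finset.sum_congr rfl hterm]
  simp only [map_add, smul_add, Finset.sum_add_distrib, map_smul, smul_smul,
    mul_right_comm _ (⟪u, _⟫ : ℂ)]
  ring

lemma inner_smul_dunkl_add_inner_smul_dunkl_reflect_comm (α b c : V n) (f : Poly n) :
    (⟪b, α⟫ : ℂ) • dunkl Rplus k c f + (⟪c, α⟫ : ℂ) • dunkl Rplus k (reflect α b) f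
      = (⟪c, α⟫ : ℂ) • dunkl Rplus k b f + (⟪b, α⟫ : ℂ) • dunkl Rplus k (reflect α c) f := by
  rw [dunkl_reflect_left, dunkl_reflect_left]
  push_cast
  module

lemma dunkl_commutator_xpoly_mul (hR : IsPositiveSystem R Rplus)
    (hk : ∀ α ∈ R, ∀ β ∈ R, k (reflect α β) = k β) (b c a : V n) (f : Poly n) :
    dunkl Rplus k b (dunkl Rplus k c (xpoly n a * f))
        - dunkl Rplus k c (dunkl Rplus k b (xpoly n a * f))
      = xpoly n a * (dunkl Rplus k b (dunkl Rplus k c f)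
        - dunkl Rplus k c (dunkl Rplus k b f)) := by
  rw [dunkl_dunkl_xpoly_mul hR hk, dunkl_dunkl_xpoly_mul hR hk,
    Finset.sum_congr rfl fun α _ => by rw [inner_smul_dunkl_add_inner_smul_dunkl_reflect_comm]]
  ring

theorem dunkl_comm (hR : IsPositiveSystem R Rplus)
    (hk : ∀ α ∈ R, ∀ β ∈ R, k (reflect α β) = k β) (b c : V n) (f : Poly n) :
    dunkl Rplus k b (dunkl Rplus k c f) = dunkl Rplus k c (dunkl Rplus k b f) := by
  have hRplus : ∀ α ∈ Rplus, α ≠ 0 := fun α hα => hR.ne_zero (hR.subset hα)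
  induction f using MvPolynomial.induction_on with
  | C z => rw [dunkl_C hRplus, dunkl_C hRplus, map_zero, map_zero]
  | add f g hf hg => rw [map_add, map_add, map_add, map_add, hf, hg]
  | mul_X f i ih =>
    have h := dunkl_commutator_xpoly_mul hR hk b c (EuclideanSpace.single i 1) f
    rwa [ih, sub_self, mul_zero, sub_eq_zero, xpoly_single, mul_comm] at h

end Commutation

theorem stmt_17_general (n : ℕ) (R Rplus : Finset (V n))
    (hrefl : ∀ α ∈ R, ∀ β ∈ R, β - (2 * ⟪β, α⟫ / ⟪α, α⟫) • α ∈ R)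
    (hsub : Rplus ⊆ R)
    (hpos : ∀ α ∈ R, α ∈ Rplus ∨ -α ∈ Rplus)
    (hdisj : ∀ α ∈ Rplus, -α ∉ Rplus)
    (k : V n → ℂ)
    (hk : ∀ α ∈ R, ∀ β ∈ R, k (β - (2 * ⟪β, α⟫ / ⟪α, α⟫) • α) = k β)
    (b c : V n) (Db Dc : Poly n → Poly n)
    (hDb : IsDunkl n Rplus k b Db) (hDc : IsDunkl n Rplus k c Dc) :
    ∀ f : Poly n, Db (Dc f) = Dc (Db f) := by
  have hR : IsPositiveSystem R Rplus := ⟨hrefl, hsub, hpos, hdisj⟩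
  have hRplus : ∀ α ∈ Rplus, α ≠ 0 := fun α hα => hR.ne_zero (hsub hα)
  rw [hDb.eq_dunkl hRplus, hDc.eq_dunkl hRplus]
  exact dunkl_comm hR hk b c

/-- the rational Dunkl operators pairwise commute:
`D_b ∘ D_c = D_c ∘ D_b` as operators on `ℂ[V]`, for all `b, c ∈ V`. -/
theorem stmt_17 (n : ℕ) (R Rplus : Finset (V n))
    (hne : ∀ α ∈ R, α ≠ (0 : V n))
    (hrefl : ∀ α ∈ R, ∀ β ∈ R, β - (2 * ⟪β, α⟫ / ⟪α, α⟫) • α ∈ R)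
    (hsub : Rplus ⊆ R)
    (hpos : ∀ α ∈ R, α ∈ Rplus ∨ -α ∈ Rplus)
    (hdisj : ∀ α ∈ Rplus, -α ∉ Rplus)
    (k : V n → ℂ)
    (hk : ∀ α ∈ R, ∀ β ∈ R, k (β - (2 * ⟪β, α⟫ / ⟪α, α⟫) • α) = k β)
    (b c : V n) (Db Dc : Poly n → Poly n)
    (hDb : IsDunkl n Rplus k b Db) (hDc : IsDunkl n Rplus k c Dc) :
    ∀ f : Poly n, Db (Dc f) = Dc (Db f) :=
  stmt_17_general n R Rplus hrefl hsub hpos hdisj k hk b c Db Dc hDb hDc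

end Stmt17
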